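/- Let u : ℝ² → ℝ be C² with Δu ≤ 0 everywhere, and suppose u(z)/log|z| → -m as |z| → ∞ for some real number m (i.e. u(z) = -m·log|z| + o(log|z|)). Then the Lebesgue integral ∫_{ℝ²} (-Δu) dA equals 2πm. In particular, if Δu is not identically zero, then m > 0. -/

import Mathlib

open MeasureTheory Filter
open scoped ENNReal

/-- The Euclidean Laplacian of a function on `ℝ²`:
`Δu = ∂²u/∂x² + ∂²u/∂y²`. -/
noncomputable def lap (u : EuclideanSpace ℝ (Fin 2) → ℝ)
    (z : EuclideanSpace ℝ (Fin 2)) : ℝ :=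
  fderiv ℝ (fun w => fderiv ℝ u w (EuclideanSpace.single 0 1)) z (EuclideanSpace.single 0 1) +
  fderiv ℝ (fun w => fderiv ℝ u w (EuclideanSpace.single 1 1)) z (EuclideanSpace.single 1 1)

/-!
Let `Φ(R) = ∫_{-π}^{π} u(R e^{iθ}) dθ` and `G(R) = ∫_{B_R} Δu`. Green's formula in polar
coordinates gives `R Φ'(R) = G(R)`, so `F(t) = Φ(eᵗ)` has derivative `G(eᵗ)`, which is
nonincreasing because `Δu ≤ 0`: `F` is concave. The growth hypothesis says `F(t)/t → -2πm`, and the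
slope of a concave function tends to its asymptotic growth rate, so `G(R) → -2πm`. Monotone
convergence turns this into the total mass of `-Δu`. If `Δu ≢ 0`, the continuous function `-Δu ≥ 0`
is positive on an open set, so the mass, hence `m`, is positive.
-/

open Set Real Topology intervalIntegral
open scoped Interval

section AntitoneDerivative

variable {F g : ℝ → ℝ}

theorem mul_sub_le_sub_le_mul_sub_of_antitone_deriv (hF : ∀ t, HasDerivAt F (g t) t)
    (hg : Antitone g) {a b : ℝ} (hab : a ≤ b) :
    g b * (b - a) ≤ F b - F a ∧ F b - F a ≤ g a * (b - a) := by
  rcases hab.eq_or_lt with rfl | hlt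
  · simp
  obtain ⟨c, hc, hslope⟩ := exists_hasDerivAt_eq_slope F g hlt
    (fun t _ => (hF t).continuousAt.continuousWithinAt) (fun t _ => hF t)
  have hF_sub : F b - F a = g c * (b - a) := by
    rw [hslope]; field_simp [sub_ne_zero.2 hlt.ne']
  rw [hF_sub]
  exact ⟨by gcongr; exact hg hc.2.le, by gcongr; exact hg hc.1.le⟩

theorem tendsto_of_antitone_deriv_of_tendsto_div_self (hF : ∀ t, HasDerivAt F (g t) t)
    (hg : Antitone g) {L : ℝ} (hlim : Tendsto (fun t => F t / t) atTop (𝓝 L)) :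
    Tendsto g atTop (𝓝 L) := by
  have hL_le : ∀ a, L ≤ g a := by
    intro a
    have hbound : ∀ᶠ t in atTop, F t / t ≤ g a + (F a - g a * a) / t := by
      filter_upwards [eventually_gt_atTop (max a 0)] with t ht
      have ht0 : 0 < t := (le_max_right a 0).trans_lt ht
      rw [div_le_iff₀ ht0, add_mul, div_mul_cancel₀ _ ht0.ne']
      linarith [(mul_sub_le_sub_le_mul_sub_of_antitone_deriv hF hg
        ((le_max_left a 0).trans ht.le)).2]
    have hrhs : Tendsto (fun t => g a + (F a - g a * a) / t) atTop (𝓝 (g a)) := by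
      simpa using tendsto_const_nhds.add (tendsto_const_nhds.div_atTop (tendsto_id (α := ℝ)))
    exact le_of_tendsto_of_tendsto hlim hrhs hbound
  have hbdd : BddBelow (range g) := ⟨L, forall_mem_range.2 hL_le⟩
  suffices h : ⨅ t, g t = L from h ▸ tendsto_atTop_ciInf hg hbdd
  refine le_antisymm ?_ (le_ciInf hL_le)
  have hbound : ∀ᶠ t in atTop, F 0 / t + ⨅ t, g t ≤ F t / t := by
    filter_upwards [eventually_gt_atTop 0] with t ht0
    rw [le_div_iff₀ ht0, add_mul, div_mul_cancel₀ _ ht0.ne']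
    nlinarith [(mul_sub_le_sub_le_mul_sub_of_antitone_deriv hF hg ht0.le).1, ciInf_le hbdd t]
  have hlhs : Tendsto (fun t => F 0 / t + ⨅ t, g t) atTop (𝓝 (⨅ t, g t)) := by
    simpa using (tendsto_const_nhds.div_atTop (tendsto_id (α := ℝ))).add tendsto_const_nhds
  exact le_of_tendsto_of_tendsto hlhs hlim hbound

end AntitoneDerivative

local notation "ℝ²" => EuclideanSpace ℝ (Fin 2)

noncomputable section PolarCoordinates

def polarDir (θ : ℝ) : ℝ² := cos θ • EuclideanSpace.single 0 1 + sin θ • EuclideanSpace.single 1 1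

def polarDirPerp (θ : ℝ) : ℝ² :=
  (-sin θ) • EuclideanSpace.single 0 1 + cos θ • EuclideanSpace.single 1 1

def ofPolar (r θ : ℝ) : ℝ² := r • polarDir θ

theorem norm_ofPolar (r θ : ℝ) : ‖ofPolar r θ‖ = |r| := by
  simp [ofPolar, polarDir, EuclideanSpace.norm_eq, Fin.sum_univ_two, mul_pow, ← mul_add,
    sqrt_sq_eq_abs]

theorem hasDerivAt_polarDir (θ : ℝ) : HasDerivAt polarDir (polarDirPerp θ) θ :=
  ((hasDerivAt_cos θ).smul_const _).add ((hasDerivAt_sin θ).smul_const _)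

theorem hasDerivAt_polarDirPerp (θ : ℝ) : HasDerivAt polarDirPerp (-polarDir θ) θ := by
  rw [polarDir, neg_add, ← neg_smul, ← neg_smul]
  exact ((hasDerivAt_sin θ).neg.smul_const _).add ((hasDerivAt_cos θ).smul_const _)

@[fun_prop]
theorem continuous_polarDir : Continuous polarDir := by unfold polarDir; fun_prop

@[fun_prop]
theorem continuous_polarDirPerp : Continuous polarDirPerp := by unfold polarDirPerp; fun_prop

theorem continuous_ofPolar : Continuous fun p : ℝ × ℝ => ofPolar p.1 p.2 :=
  continuous_fst.smul (continuous_polarDir.comp continuous_snd)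

def prodEquivEuclidean : ℝ × ℝ ≃ᵐ ℝ² :=
  MeasurableEquiv.finTwoArrow.symm.trans (MeasurableEquiv.toLp 2 (Fin 2 → ℝ))

theorem measurePreserving_prodEquivEuclidean : MeasurePreserving prodEquivEuclidean :=
  (EuclideanSpace.volume_preserving_symm_measurableEquiv_toLp (Fin 2)).symm.comp
    (volume_preserving_finTwoArrow ℝ).symm

theorem prodEquivEuclidean_polarCoord_symm (p : ℝ × ℝ) :
    prodEquivEuclidean (polarCoord.symm p) = ofPolar p.1 p.2 := by
  ext i
  fin_cases i <;> simp [prodEquivEuclidean, ofPolar, polarDir, MeasurableEquiv.finTwoArrow]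

theorem integral_ball_eq_intervalIntegral_polar {g : ℝ² → ℝ} (hg : Continuous g) {R : ℝ}
    (hR : 0 ≤ R) :
    ∫ z in Metric.ball (0 : ℝ²) R, g z = ∫ r in 0..R, ∫ θ in -π..π, r * g (ofPolar r θ) := by
  have hpolar : ∀ p ∈ polarCoord.target,
      p.1 • (Metric.ball 0 R).indicator g (prodEquivEuclidean (polarCoord.symm p)) =
        (Iio R ×ˢ univ).indicator (fun q : ℝ × ℝ => q.1 * g (ofPolar q.1 q.2)) p := by
    rintro ⟨r, θ⟩ hr
    have hr : 0 < r := hr.1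
    rw [prodEquivEuclidean_polarCoord_symm]
    by_cases hrR : r < R <;> simp [indicator, norm_ofPolar, abs_of_pos hr, hrR]
  have htarget : polarCoord.target ∩ Iio R ×ˢ univ = Ioo 0 R ×ˢ Ioo (-π) π := by
    ext ⟨r, θ⟩
    simp only [polarCoord_target, mem_inter_iff, mem_prod, mem_Ioi, mem_Ioo, mem_Iio, mem_univ]
    tauto
  have hint : IntegrableOn (fun q : ℝ × ℝ => q.1 * g (ofPolar q.1 q.2))
      (Ioo 0 R ×ˢ Ioo (-π) π) (volume.prod volume) :=
    ((continuous_fst.mul (hg.comp continuous_ofPolar)).continuousOn.integrableOn_compact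
      (isCompact_Icc.prod isCompact_Icc)).mono_set
      (prod_mono Ioo_subset_Icc_self Ioo_subset_Icc_self)
  calc ∫ z in Metric.ball (0 : ℝ²) R, g z = ∫ z, (Metric.ball 0 R).indicator g z :=
        (MeasureTheory.integral_indicator measurableSet_ball).symm
    _ = ∫ p in polarCoord.target,
          p.1 • (Metric.ball 0 R).indicator g (prodEquivEuclidean (polarCoord.symm p)) := by
        rw [← measurePreserving_prodEquivEuclidean.integral_comp']
        exact (integral_comp_polarCoord_symm _).symm
    _ = ∫ p in Ioo 0 R ×ˢ Ioo (-π) π, p.1 * g (ofPolar p.1 p.2) := by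
        rw [setIntegral_congr_fun polarCoord.open_target.measurableSet hpolar,
          setIntegral_indicator (measurableSet_Iio.prod .univ), htarget]
    _ = ∫ r in 0..R, ∫ θ in -π..π, r * g (ofPolar r θ) := by
        rw [Measure.volume_eq_prod, setIntegral_prod _ hint, integral_of_le hR,
          integral_Ioc_eq_integral_Ioo]
        refine setIntegral_congr_fun measurableSet_Ioo fun r _ => ?_
        rw [integral_of_le (by linarith [pi_pos]), integral_Ioc_eq_integral_Ioo]

theorem hasDerivAt_ofPolar_radius (r θ : ℝ) :
    HasDerivAt (fun s => ofPolar s θ) (polarDir θ) r := by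
  have h := (hasDerivAt_id r).smul_const (polarDir θ)
  rw [one_smul] at h
  exact h

theorem hasDerivAt_ofPolar_angle (r θ : ℝ) :
    HasDerivAt (ofPolar r) (r • polarDirPerp θ) θ :=
  (hasDerivAt_polarDir θ).const_smul r

theorem bilin_polarDir_add_bilin_polarDirPerp (B : ℝ² →L[ℝ] ℝ² →L[ℝ] ℝ) (θ : ℝ) :
    B (polarDir θ) (polarDir θ) + B (polarDirPerp θ) (polarDirPerp θ) =
      B (EuclideanSpace.single 0 1) (EuclideanSpace.single 0 1) +
        B (EuclideanSpace.single 1 1) (EuclideanSpace.single 1 1) := by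
  simp only [polarDir, polarDirPerp, map_add, map_smul, add_apply, smul_apply,
    smul_eq_mul]
  linear_combination (sin_sq_add_cos_sq θ) *
    (B (EuclideanSpace.single 0 1) (EuclideanSpace.single 0 1) +
      B (EuclideanSpace.single 1 1) (EuclideanSpace.single 1 1))

end PolarCoordinates

theorem hasDerivAt_intervalIntegral_of_continuous {E : Type*} [NormedAddCommGroup E]
    [NormedSpace ℝ E] {F F' : ℝ → ℝ → E} {a b : ℝ} (hF : ∀ x, Continuous (F x))
    (hF' : Continuous (Function.uncurry F'))
    (hderiv : ∀ x t, HasDerivAt (fun x => F x t) (F' x t) x) (x₀ : ℝ) :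
    HasDerivAt (fun x => ∫ t in a..b, F x t) (∫ t in a..b, F' x₀ t) x₀ := by
  obtain ⟨C, hC⟩ := ((isCompact_closedBall x₀ 1).prod isCompact_uIcc).exists_bound_of_continuousOn
    hF'.continuousOn
  exact (hasDerivAt_integral_of_dominated_loc_of_deriv_le (bound := fun _ => C)
    (Metric.closedBall_mem_nhds x₀ one_pos) (.of_forall fun x => (hF x).aestronglyMeasurable)
    ((hF x₀).intervalIntegrable _ _) (hF'.uncurry_left x₀).aestronglyMeasurable
    (.of_forall fun t ht x hx => hC (x, t) ⟨hx, uIoc_subset_uIcc ht⟩) intervalIntegrable_const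
    (.of_forall fun t _ x _ => hderiv x t)).2

section SecondDerivative

variable {𝕜 E F : Type*} [NontriviallyNormedField 𝕜] [NormedAddCommGroup E] [NormedSpace 𝕜 E]
  [NormedAddCommGroup F] [NormedSpace 𝕜 F] {f : E → F}

theorem ContDiff.continuous_fderiv_fderiv (hf : ContDiff 𝕜 2 f) :
    Continuous (fderiv 𝕜 (fderiv 𝕜 f)) :=
  (hf.fderiv_right (m := 1) le_rfl).continuous_fderiv one_ne_zero

theorem ContDiff.hasFDerivAt_fderiv (hf : ContDiff 𝕜 2 f) (x : E) :
    HasFDerivAt (fderiv 𝕜 f) (fderiv 𝕜 (fderiv 𝕜 f) x) x :=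
  ((hf.fderiv_right (m := 1) le_rfl).differentiable one_ne_zero x).hasFDerivAt

end SecondDerivative

section Laplacian

variable {u : ℝ² → ℝ} (hu : ContDiff ℝ 2 u)
include hu

theorem lap_eq_fderiv_fderiv (z : ℝ²) :
    lap u z = fderiv ℝ (fderiv ℝ u) z (EuclideanSpace.single 0 1) (EuclideanSpace.single 0 1) +
      fderiv ℝ (fderiv ℝ u) z (EuclideanSpace.single 1 1) (EuclideanSpace.single 1 1) := by
  simp [lap, fderiv_clm_apply (hu.hasFDerivAt_fderiv z).differentiableAt
    (differentiableAt_const _)]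

theorem continuous_lap : Continuous (lap u) := by
  have := hu.continuous_fderiv_fderiv
  simp only [funext (lap_eq_fderiv_fderiv hu)]
  fun_prop

theorem hasDerivAt_comp_ofPolar_radius (r θ : ℝ) :
    HasDerivAt (fun s => u (ofPolar s θ)) (fderiv ℝ u (ofPolar r θ) (polarDir θ)) r :=
  (hu.differentiable two_ne_zero _).hasFDerivAt.comp_hasDerivAt r (hasDerivAt_ofPolar_radius r θ)

theorem hasDerivAt_mul_fderiv_polarDir (r θ : ℝ) :
    HasDerivAt (fun s => s * fderiv ℝ u (ofPolar s θ) (polarDir θ))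
      (fderiv ℝ u (ofPolar r θ) (polarDir θ) +
        r * fderiv ℝ (fderiv ℝ u) (ofPolar r θ) (polarDir θ) (polarDir θ)) r := by
  have h := ((hu.hasFDerivAt_fderiv _).comp_hasDerivAt r
    (hasDerivAt_ofPolar_radius r θ)).clm_apply (hasDerivAt_const r (polarDir θ))
  simpa using (hasDerivAt_id' r).fun_mul h

theorem hasDerivAt_fderiv_polarDirPerp (r θ : ℝ) :
    HasDerivAt (fun φ => fderiv ℝ u (ofPolar r φ) (polarDirPerp φ))
      (r * fderiv ℝ (fderiv ℝ u) (ofPolar r θ) (polarDirPerp θ) (polarDirPerp θ) -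
        fderiv ℝ u (ofPolar r θ) (polarDir θ)) θ := by
  have h := ((hu.hasFDerivAt_fderiv _).comp_hasDerivAt θ
    (hasDerivAt_ofPolar_angle r θ)).clm_apply (hasDerivAt_polarDirPerp θ)
  simpa [sub_eq_add_neg] using h

theorem integral_ball_lap {R : ℝ} (hR : 0 ≤ R) :
    ∫ z in Metric.ball (0 : ℝ²) R, lap u z =
      R * ∫ θ in -π..π, fderiv ℝ u (ofPolar R θ) (polarDir θ) := by
  have hDu := hu.continuous_fderiv two_ne_zero
  have hD2u := hu.continuous_fderiv_fderiv
  -- `r Δu = ∂ᵣ (r ∂ᵣ u) + ∂_θ (r⁻¹ ∂_θ u)`: the angular part integrates to zero by periodicity.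
  let P : ℝ → ℝ → ℝ := fun r θ => fderiv ℝ u (ofPolar r θ) (polarDir θ) +
    r * fderiv ℝ (fderiv ℝ u) (ofPolar r θ) (polarDir θ) (polarDir θ)
  let Q : ℝ → ℝ → ℝ := fun r θ =>
    r * fderiv ℝ (fderiv ℝ u) (ofPolar r θ) (polarDirPerp θ) (polarDirPerp θ) -
      fderiv ℝ u (ofPolar r θ) (polarDir θ)
  have hP_cont : Continuous (Function.uncurry P) := by
    simp only [P, Function.uncurry_def, ofPolar]; fun_prop
  have hQ_cont : Continuous (Function.uncurry Q) := by
    simp only [Q, Function.uncurry_def, ofPolar]; fun_prop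
  have hQ (r : ℝ) : ∫ θ in -π..π, Q r θ = 0 := by
    rw [integral_eq_sub_of_hasDerivAt (fun θ _ => hasDerivAt_fderiv_polarDirPerp hu r θ)
      ((hQ_cont.uncurry_left r).intervalIntegrable _ _)]
    simp [ofPolar, polarDir, polarDirPerp]
  have hP (r : ℝ) : HasDerivAt (fun r => r * ∫ θ in -π..π, fderiv ℝ u (ofPolar r θ) (polarDir θ))
      (∫ θ in -π..π, P r θ) r := by
    simp_rw [← intervalIntegral.integral_const_mul]
    exact hasDerivAt_intervalIntegral_of_continuous (fun r => by simp only [ofPolar]; fun_prop)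
      hP_cont (hasDerivAt_mul_fderiv_polarDir hu) r
  calc ∫ z in Metric.ball (0 : ℝ²) R, lap u z
      = ∫ r in 0..R, ∫ θ in -π..π, r * lap u (ofPolar r θ) :=
        integral_ball_eq_intervalIntegral_polar (continuous_lap hu) hR
    _ = ∫ r in 0..R, ∫ θ in -π..π, P r θ := by
        refine integral_congr fun r _ => ?_
        have hPQ (θ : ℝ) : r * lap u (ofPolar r θ) = P r θ + Q r θ := by
          rw [lap_eq_fderiv_fderiv hu, ← bilin_polarDir_add_bilin_polarDirPerp _ θ]
          ring
        simp_rw [hPQ]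
        rw [integral_add ((hP_cont.uncurry_left r).intervalIntegrable _ _)
          ((hQ_cont.uncurry_left r).intervalIntegrable _ _), hQ, add_zero]
    _ = R * ∫ θ in -π..π, fderiv ℝ u (ofPolar R θ) (polarDir θ) := by
        rw [integral_eq_sub_of_hasDerivAt (fun r _ => hP r)
          ((continuous_parametric_intervalIntegral_of_continuous' hP_cont _ _).intervalIntegrable
            _ _)]
        simp

end Laplacian

noncomputable def angularIntegral (u : ℝ² → ℝ) (R : ℝ) : ℝ := ∫ θ in -π..π, u (ofPolar R θ)

section AngularIntegral

variable {u : ℝ² → ℝ}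

theorem hasDerivAt_angularIntegral_exp (hu : ContDiff ℝ 2 u) (t : ℝ) :
    HasDerivAt (fun t => angularIntegral u (exp t))
      (∫ z in Metric.ball (0 : ℝ²) (exp t), lap u z) t := by
  have hDu := hu.continuous_fderiv two_ne_zero
  have hu' := hu.continuous
  have hderiv : HasDerivAt (angularIntegral u)
      (∫ θ in -π..π, fderiv ℝ u (ofPolar (exp t) θ) (polarDir θ)) (exp t) :=
    hasDerivAt_intervalIntegral_of_continuous (fun r => by simp only [ofPolar]; fun_prop)
      (by simp only [Function.uncurry_def, ofPolar]; fun_prop)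
      (hasDerivAt_comp_ofPolar_radius hu) (exp t)
  rw [integral_ball_lap hu (exp_pos t).le, mul_comm]
  exact hderiv.comp t (hasDerivAt_exp t)

theorem tendsto_angularIntegral_exp_div (hu : Continuous u) {m : ℝ}
    (hasymp : Tendsto (fun z => u z / log ‖z‖) (comap norm atTop) (𝓝 (-m))) :
    Tendsto (fun t => angularIntegral u (exp t) / t) atTop (𝓝 (-(2 * π * m))) := by
  have hlog (t θ : ℝ) : log ‖ofPolar (exp t) θ‖ = t := by
    rw [norm_ofPolar, abs_of_pos (exp_pos t), log_exp]
  have hlim (θ : ℝ) : Tendsto (fun t => u (ofPolar (exp t) θ) / t) atTop (𝓝 (-m)) := by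
    have hcircle : Tendsto (fun t => ofPolar (exp t) θ) atTop (comap norm atTop) := by
      refine tendsto_comap_iff.2 ?_
      simpa [Function.comp_def, norm_ofPolar, abs_of_pos (exp_pos _)] using tendsto_exp_atTop
    simpa only [Function.comp_def, hlog] using hasymp.comp hcircle
  obtain ⟨M, hM⟩ := eventually_atTop.1 (eventually_comap.1
    (hasymp.norm.eventually (gt_mem_nhds (lt_add_one ‖-m‖))))
  have hbound : ∀ᶠ t in atTop, ∀ᵐ θ, θ ∈ Ι (-π) π →
      ‖u (ofPolar (exp t) θ) / t‖ ≤ ‖-m‖ + 1 := by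
    filter_upwards [tendsto_exp_atTop.eventually_ge_atTop M] with t ht
    refine .of_forall fun θ _ => ?_
    have h := hM _ ht (ofPolar (exp t) θ) (by rw [norm_ofPolar, abs_of_pos (exp_pos t)])
    rw [hlog] at h
    exact h.le
  have hdom := tendsto_integral_filter_of_dominated_convergence
    (F := fun t θ => u (ofPolar (exp t) θ) / t) _
    (.of_forall fun t => (by simp only [ofPolar]; fun_prop :
      Continuous fun θ => u (ofPolar (exp t) θ) / t).aestronglyMeasurable)
    hbound intervalIntegrable_const (.of_forall fun θ _ => hlim θ)
  rw [intervalIntegral.integral_const, smul_eq_mul, sub_neg_eq_add, ← two_mul, mul_neg] at hdom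
  simpa only [angularIntegral, ← intervalIntegral.integral_div] using hdom

theorem integrableOn_ball_lap (hu : ContDiff ℝ 2 u) (R : ℝ) :
    IntegrableOn (lap u) (Metric.ball (0 : ℝ²) R) :=
  ((continuous_lap hu).locallyIntegrable.integrableOn_isCompact
    (isCompact_closedBall 0 R)).mono_set Metric.ball_subset_closedBall

theorem antitone_integral_ball_lap (hu : ContDiff ℝ 2 u) (hsuper : ∀ z, lap u z ≤ 0) :
    Antitone fun R => ∫ z in Metric.ball (0 : ℝ²) R, lap u z := by
  intro R₁ R₂ hR
  have h := setIntegral_mono_set (integrableOn_ball_lap hu R₂).neg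
    (.of_forall fun z => neg_nonneg.2 (hsuper z)) (Metric.ball_subset_ball hR).eventuallyLE
  simpa [MeasureTheory.integral_neg] using h

theorem tendsto_integral_ball_exp_lap (hu : ContDiff ℝ 2 u) (hsuper : ∀ z, lap u z ≤ 0) {m : ℝ}
    (hasymp : Tendsto (fun z => u z / log ‖z‖) (comap norm atTop) (𝓝 (-m))) :
    Tendsto (fun t => ∫ z in Metric.ball (0 : ℝ²) (exp t), lap u z) atTop (𝓝 (-(2 * π * m))) :=
  tendsto_of_antitone_deriv_of_tendsto_div_self (hasDerivAt_angularIntegral_exp hu)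
    ((antitone_integral_ball_lap hu hsuper).comp_monotone exp_monotone)
    (tendsto_angularIntegral_exp_div hu.continuous hasymp)

end AngularIntegral

/-- If `u` is `C²` on `ℝ²` with `Δu ≤ 0`, and `u(z) = -m log|z| + o(log|z|)` as
`|z| → ∞`, then the total mass `∫_{ℝ²} (-Δu) dA` equals `2πm`; in particular if
`Δu` is not identically zero then `m > 0`. -/
theorem total_curvature_eq_two_pi_m
    (u : EuclideanSpace ℝ (Fin 2) → ℝ) (m : ℝ)
    (hu : ContDiff ℝ 2 u)
    (hsuper : ∀ z, lap u z ≤ 0)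
    (hasymp : Tendsto (fun z => u z / Real.log ‖z‖) (comap norm atTop) (nhds (-m))) :
    (∫⁻ z, ENNReal.ofReal (-lap u z)) = ENNReal.ofReal (2 * Real.pi * m) ∧
    ((∃ z, lap u z ≠ 0) → 0 < m) := by
  have hcont : Continuous fun z => ENNReal.ofReal (-lap u z) :=
    ENNReal.continuous_ofReal.comp (continuous_lap hu).neg
  have hball (R : ℝ) : ∫⁻ z in Metric.ball 0 R, ENNReal.ofReal (-lap u z) =
      ENNReal.ofReal (-∫ z in Metric.ball 0 R, lap u z) := by
    rw [← MeasureTheory.integral_neg]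
    exact (ofReal_integral_eq_lintegral_ofReal (integrableOn_ball_lap hu R).neg
      (.of_forall fun z => neg_nonneg.2 (hsuper z))).symm
  have hmass : ∫⁻ z, ENNReal.ofReal (-lap u z) = ENNReal.ofReal (2 * π * m) := by
    refine (aecover_ball (x := 0) tendsto_exp_atTop).lintegral_eq_of_tendsto _
      hcont.measurable.aemeasurable ?_
    simp_rw [hball]
    exact ENNReal.tendsto_ofReal
      (by simpa using (tendsto_integral_ball_exp_lap hu hsuper hasymp).neg)
  refine ⟨hmass, fun ⟨z₀, hz₀⟩ => ?_⟩
  have hpos : ∫⁻ z, ENNReal.ofReal (-lap u z) ≠ 0 := by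
    rw [Ne, lintegral_eq_zero_iff hcont.measurable, hcont.ae_eq_iff_eq volume continuous_zero]
    intro h
    have h₀ : -lap u z₀ ≤ 0 := by simpa using congr_fun h z₀
    exact hz₀ (le_antisymm (hsuper z₀) (by linarith))
  rw [hmass, ← pos_iff_ne_zero, ENNReal.ofReal_pos] at hpos
  exact pos_of_mul_pos_right hpos (by positivity)
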